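/- For every k-valued Hochschild p-cochain f and q-cochain g of A, the Gerstenhaber bracket satisfies [f̂, ĝ] = (f ∘ ĝ − (−1)^{(p−1)(q−1)} g ∘ f̂)^; in particular the image of the map f ↦ f̂ is closed under the Gerstenhaber bracket of Hochschild cochains with values in A. -/

import Mathlib

noncomputable section HochschildHopf

open scoped TensorProduct BigOperators

/-- Merging of the entries `i` and `i+1` of a `(p+1)`-tuple by multiplication,
yielding a `p`-tuple; this encodes the inner terms of the Hochschild differential. -/
def hochContract {A : Type*} [Ring A] {p : ℕ} (a : Fin (p + 1) → A) (i : Fin p) :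
    Fin p → A :=
  fun j =>
    if (j : ℕ) < (i : ℕ) then a j.castSucc
    else if j = i then a j.castSucc * a j.succ
    else a j.succ

/-- The Hochschild differential on `k`-valued `p`-cochains of a Hopf algebra `A`
(the `A`-bimodule structure on `k` is given on both sides by the counit `ε`):
`(∂f)(a⁰,…,aᵖ) = ε(a⁰)f(a¹,…,aᵖ) + Σᵢ (-1)^(i+1) f(a⁰,…,aⁱaⁱ⁺¹,…,aᵖ)
  + (-1)^(p+1) f(a⁰,…,aᵖ⁻¹)ε(aᵖ)`. -/
def hochDK {k A : Type*} [Field k] [Ring A] [HopfAlgebra k A]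
    (p : ℕ) (f : (Fin p → A) → k) : (Fin (p + 1) → A) → k :=
  fun a =>
    Coalgebra.counit (a 0) * f (Fin.tail a)
      + ∑ i : Fin p, (-1 : k) ^ ((i : ℕ) + 1) * f (hochContract a i)
      + (-1 : k) ^ (p + 1) * (f (Fin.init a) * Coalgebra.counit (a (Fin.last p)))

/-- The Hochschild differential on `A`-valued `p`-cochains of `A`:
`(∂F)(a⁰,…,aᵖ) = a⁰·F(a¹,…,aᵖ) + Σᵢ (-1)^(i+1) F(a⁰,…,aⁱaⁱ⁺¹,…,aᵖ)
  + (-1)^(p+1) F(a⁰,…,aᵖ⁻¹)·aᵖ`. -/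
def hochDA (k : Type*) {A : Type*} [Field k] [Ring A] [HopfAlgebra k A]
    (p : ℕ) (F : (Fin p → A) → A) : (Fin (p + 1) → A) → A :=
  fun a =>
    a 0 * F (Fin.tail a)
      + ∑ i : Fin p, (-1 : k) ^ ((i : ℕ) + 1) • F (hochContract a i)
      + (-1 : k) ^ (p + 1) • (F (Fin.init a) * a (Fin.last p))

/-- Cup product of `k`-valued cochains:
`(f ⌣ g)(a¹,…,a^{p+q}) = f(a¹,…,aᵖ) g(a^{p+1},…,a^{p+q})`. -/
def cupK {k A : Type*} [Field k] [Ring A] [HopfAlgebra k A]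
    (p q : ℕ) (f : (Fin p → A) → k) (g : (Fin q → A) → k) :
    (Fin (p + q) → A) → k :=
  fun a => f (fun i => a (Fin.castAdd q i)) * g (fun j => a (Fin.natAdd p j))

/-- Cup product of `A`-valued cochains. -/
def cupA {A : Type*} [Ring A]
    (p q : ℕ) (F : (Fin p → A) → A) (G : (Fin q → A) → A) :
    (Fin (p + q) → A) → A :=
  fun a => F (fun i => a (Fin.castAdd q i)) * G (fun j => a (Fin.natAdd p j))

/-- The brace operation `f ∘ᵢ G` (here `i` is 0-indexed): insert the value of the
`A`-valued `q`-cochain `G` into the `i`-th slot of the `p`-cochain `f`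
(with values in `M`), producing a `(p+q-1)`-cochain. -/
def braceIns {A M : Type*} [Ring A] (p q : ℕ) (f : (Fin p → A) → M) (i : Fin p)
    (G : (Fin q → A) → A) : (Fin (p + q - 1) → A) → M :=
  fun c => f (fun j =>
    if _h : (j : ℕ) < (i : ℕ) then
      c ⟨(j : ℕ), by have := j.isLt; have := i.isLt; omega⟩
    else if _h' : (j : ℕ) = (i : ℕ) then
      G (fun l => c ⟨(i : ℕ) + (l : ℕ), by have := i.isLt; have := l.isLt; omega⟩)
    else
      c ⟨(j : ℕ) + q - 1, by have := j.isLt; have := i.isLt; omega⟩)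

/-- The composition operation `f ∘ G = Σ_{i=1}^{p} (-1)^{q(i-1)} f ∘ᵢ G`
(with the 0-indexed convention the sign is `(-1)^{q·i}`). -/
def composeIns (k : Type*) {A M : Type*} [Field k] [Ring A] [HopfAlgebra k A]
    [AddCommMonoid M] [Module k M] (p q : ℕ) (f : (Fin p → A) → M)
    (G : (Fin q → A) → A) : (Fin (p + q - 1) → A) → M :=
  fun c => ∑ i : Fin p, (-1 : k) ^ (q * (i : ℕ)) • braceIns p q f i G c

end HochschildHopf


noncomputable section HatSection

open scoped TensorProduct

variable {k A : Type*} [Field k] [Ring A] [HopfAlgebra k A]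

set_option maxHeartbeats 1600000 in
/-- The linear map `f ↦ f̂` from `k`-valued multilinear `p`-cochains to `A`-valued
multilinear `p`-cochains of the Hopf algebra `A`, given in Sweedler notation by
`f̂(a¹,…,aᵖ) = a¹₍₁₎⋯aᵖ₍₁₎ • f(a¹₍₂₎,…,aᵖ₍₂₎)` (it is defined here by recursion on `p`,
comultiplying the first entry). -/
def hatAux : ∀ p : ℕ,
    MultilinearMap k (fun _ : Fin p => A) k →ₗ[k] MultilinearMap k (fun _ : Fin p => A) A
  | 0 =>
    { toFun := fun f => MultilinearMap.constOfIsEmpty k _ (algebraMap k A (f Fin.elim0))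
      map_add' := fun f g => by
        ext a
        simp [MultilinearMap.constOfIsEmpty]
      map_smul' := fun c f => by
        ext a
        simp [MultilinearMap.constOfIsEmpty, Algebra.smul_def] }
  | (p + 1) =>
    { toFun := fun f =>
        LinearMap.uncurryLeft
          ((TensorProduct.lift (LinearMap.mk₂ k
              (fun x y => x • (hatAux p (f.curryLeft y)))
              (fun x₁ x₂ y => add_smul x₁ x₂ _)
              (fun c x y => MultilinearMap.ext fun m => by
                simp [smul_mul_assoc])
              (fun x y₁ y₂ => MultilinearMap.ext fun m => by
                simp [map_add, mul_add])
              (fun c x y => MultilinearMap.ext fun m => by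
                simp [map_smul, mul_smul_comm]))).comp
            (Coalgebra.comul (R := k)))
      map_add' := fun f g => by
        ext a
        simp only [LinearMap.uncurryLeft_apply, LinearMap.comp_apply,
          MultilinearMap.add_apply]
        generalize Coalgebra.comul (R := k) (a 0) = t
        induction t using TensorProduct.induction_on with
        | zero => simp
        | tmul x y =>
          simp [show (f + g).curryLeft = f.curryLeft + g.curryLeft from rfl,
            smul_add, mul_add]
        | add s t hs ht =>
          simp only [map_add, MultilinearMap.add_apply] at hs ht ⊢
          rw [hs, ht]; abel
      map_smul' := fun c f => by
        ext a
        simp only [LinearMap.uncurryLeft_apply, LinearMap.comp_apply,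
          RingHom.id_apply, MultilinearMap.smul_apply]
        generalize Coalgebra.comul (R := k) (a 0) = t
        induction t using TensorProduct.induction_on with
        | zero => simp
        | tmul x y =>
          simp [show (c • f).curryLeft = c • f.curryLeft from rfl,
            mul_smul_comm]
        | add s t hs ht =>
          simp only [map_add, MultilinearMap.add_apply, smul_add] at hs ht ⊢
          rw [hs, ht] }

open Classical in
/-- `hat p f` is the `A`-valued Hochschild cochain `f̂` associated to a `k`-valued
`k`-multilinear cochain `f`, `f̂(a¹,…,aᵖ) = a¹₍₁₎⋯aᵖ₍₁₎ • f(a¹₍₂₎,…,aᵖ₍₂₎)`;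
on functions that are not multilinear it is defined to be `0`. -/
def hat (p : ℕ) (f : (Fin p → A) → k) : (Fin p → A) → A :=
  if h : ∃ g : MultilinearMap k (fun _ : Fin p => A) k, ⇑g = f then
    ⇑(hatAux p h.choose)
  else 0

end HatSection


noncomputable section Dev
open scoped TensorProduct
open TensorProduct LinearMap

variable {k A : Type*} [Field k] [Ring A] [HopfAlgebra k A]

/-- The step linear map appearing in the recursion of `hatAux`. -/
def hatCurry (p : ℕ) (f : MultilinearMap k (fun _ : Fin (p+1) => A) k) :
    A ⊗[k] A →ₗ[k] MultilinearMap k (fun _ : Fin p => A) A :=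
  TensorProduct.lift (LinearMap.mk₂ k
    (fun x y => x • (hatAux p (f.curryLeft y)))
    (fun x₁ x₂ y => add_smul x₁ x₂ _)
    (fun c x y => MultilinearMap.ext fun m => by
      simp [smul_mul_assoc])
    (fun x y₁ y₂ => MultilinearMap.ext fun m => by
      simp [map_add, mul_add])
    (fun c x y => MultilinearMap.ext fun m => by
      simp [map_smul, mul_smul_comm]))

@[simp] lemma hatCurry_tmul (p : ℕ) (f : MultilinearMap k (fun _ : Fin (p+1) => A) k)
    (x y : A) : hatCurry p f (x ⊗ₜ[k] y) = x • hatAux p (f.curryLeft y) := by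
  simp [hatCurry]

lemma hatAux_succ_def (p : ℕ) (f : MultilinearMap k (fun _ : Fin (p+1) => A) k) :
    hatAux (p+1) f = LinearMap.uncurryLeft ((hatCurry p f).comp (Coalgebra.comul (R := k))) :=
  rfl

lemma hatAux_succ (p : ℕ) (f : MultilinearMap k (fun _ : Fin (p+1) => A) k)
    (a : Fin (p+1) → A) :
    hatAux (p+1) f a = hatCurry p f (Coalgebra.comul (R := k) (a 0)) (Fin.tail a) := by
  rw [hatAux_succ_def]; rfl

lemma hatAux_succ_curry (p : ℕ) (f : MultilinearMap k (fun _ : Fin (p+1) => A) k)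
    (z : A) :
    (hatAux (p+1) f).curryLeft z = hatCurry p f (Coalgebra.comul (R := k) z) := by
  rw [hatAux_succ_def, LinearMap.curry_uncurryLeft, LinearMap.comp_apply]

lemma hatAux_zero_apply (f : MultilinearMap k (fun _ : Fin 0 => A) k) (a : Fin 0 → A) :
    hatAux 0 f a = algebraMap k A (f a) := by
  have : a = Fin.elim0 := Subsingleton.elim _ _
  subst this
  rfl

lemma hat_coe (p : ℕ) (f : MultilinearMap k (fun _ : Fin p => A) k) :
    hat p ⇑f = ⇑(hatAux p f) := by
  have h : ∃ g : MultilinearMap k (fun _ : Fin p => A) k, ⇑g = ⇑f := ⟨f, rfl⟩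
  rw [hat, dif_pos h]
  have h2 : h.choose = f := MultilinearMap.coe_injective h.choose_spec
  rw [h2]

lemma hatAux_cast {n n' : ℕ} (h : n = n') (F : MultilinearMap k (fun _ : Fin n => A) k)
    (c : Fin n' → A) :
    hatAux n' (F.domDomCongr (finCongr h)) c = hatAux n F (fun j => c (finCongr h j)) := by
  subst h
  rfl

/-- The reindexed argument vector used in the brace operation (with explicit target
dimension `n`, `p + q = n + 1`). -/
def innerN (p q n : ℕ) (hn : p + q = n + 1) (i : Fin p) (G : (Fin q → A) → A)
    (c : Fin n → A) : Fin p → A :=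
  fun j =>
    if _h : (j : ℕ) < (i : ℕ) then
      c ⟨(j : ℕ), by have := j.isLt; have := i.isLt; omega⟩
    else if _h' : (j : ℕ) = (i : ℕ) then
      G (fun l => c ⟨(i : ℕ) + (l : ℕ), by have := i.isLt; have := l.isLt; omega⟩)
    else
      c ⟨(j : ℕ) + q - 1, by have := j.isLt; have := i.isLt; omega⟩

lemma braceIns_eq_innerN (p q : ℕ) {M : Type*} (f : (Fin p → A) → M) (i : Fin p)
    (G : (Fin q → A) → A) (c : Fin (p + q - 1) → A) (hn : p + q = (p + q - 1) + 1) :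
    braceIns p q f i G c = f (innerN p q (p + q - 1) hn i G c) :=
  rfl

lemma innerN_update_lt (p q n : ℕ) (hn : p + q = n + 1) (i : Fin p)
    (G : (Fin q → A) → A) (c : Fin n → A) (t : Fin n) (ht : (t : ℕ) < (i : ℕ)) (x : A) :
    innerN p q n hn i G (Function.update c t x)
      = Function.update (innerN p q n hn i G c) ⟨(t : ℕ), by have := i.isLt; omega⟩ x := by
  funext j
  rcases lt_trichotomy (j : ℕ) (i : ℕ) with h | h | h
  · by_cases hj : (j : ℕ) = (t : ℕ)
    · have e1 : j = (⟨(t : ℕ), by have := i.isLt; omega⟩ : Fin p) := Fin.ext hj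
      rw [e1, Function.update_self]
      simp only [innerN, dif_pos ht]
      have e2 : (⟨((⟨(t : ℕ), by have := i.isLt; omega⟩ : Fin p) : ℕ), by
          have := t.isLt; omega⟩ : Fin n) = t := Fin.ext rfl
      rw [e2, Function.update_self]
    · rw [Function.update_of_ne (Fin.ne_of_val_ne (show (j : ℕ) ≠ (t : ℕ) from hj))]
      simp only [innerN, dif_pos h]
      rw [Function.update_of_ne (Fin.ne_of_val_ne (show (j : ℕ) ≠ (t : ℕ) from hj))]
  · rw [Function.update_of_ne (Fin.ne_of_val_ne (show (j : ℕ) ≠ (t : ℕ) by omega))]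
    simp only [innerN, dif_neg (by omega : ¬ (j : ℕ) < (i : ℕ)), dif_pos h]
    congr 1
    funext l
    exact Function.update_of_ne
      (Fin.ne_of_val_ne (show (i : ℕ) + (l : ℕ) ≠ (t : ℕ) by omega)) _ _
  · rw [Function.update_of_ne (Fin.ne_of_val_ne (show (j : ℕ) ≠ (t : ℕ) by omega))]
    simp only [innerN, dif_neg (by omega : ¬ (j : ℕ) < (i : ℕ)),
      dif_neg (by omega : ¬ (j : ℕ) = (i : ℕ))]
    exact Function.update_of_ne
      (Fin.ne_of_val_ne (show (j : ℕ) + q - 1 ≠ (t : ℕ) by omega)) _ _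

lemma innerN_update_mid (p q n : ℕ) (hn : p + q = n + 1) (i : Fin p)
    (G : (Fin q → A) → A) (c : Fin n → A) (l : Fin q) (x : A) :
    innerN p q n hn i G
        (Function.update c ⟨(i : ℕ) + (l : ℕ), by have := i.isLt; have := l.isLt; omega⟩ x)
      = Function.update (innerN p q n hn i G c) i
          (G (Function.update (fun l' : Fin q =>
              c ⟨(i : ℕ) + (l' : ℕ), by have := i.isLt; have := l'.isLt; omega⟩) l x)) := by
  have hl := l.isLt
  funext j
  rcases lt_trichotomy (j : ℕ) (i : ℕ) with h | h | h
  · rw [Function.update_of_ne (Fin.ne_of_val_ne (show (j : ℕ) ≠ (i : ℕ) by omega))]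
    simp only [innerN, dif_pos h]
    exact Function.update_of_ne
      (Fin.ne_of_val_ne (show (j : ℕ) ≠ (i : ℕ) + (l : ℕ) by omega)) _ _
  · have e1 : j = i := Fin.ext h
    rw [e1, Function.update_self]
    simp only [innerN]
    rw [dif_neg (lt_irrefl (i : ℕ)), dif_pos trivial]
    congr 1
    funext l'
    by_cases hl' : l' = l
    · rw [hl', Function.update_self, Function.update_self]
    · have hv : (l' : ℕ) ≠ (l : ℕ) := fun hh => hl' (Fin.ext hh)
      rw [Function.update_of_ne hl',
        Function.update_of_ne (Fin.ne_of_val_ne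
          (show (i : ℕ) + (l' : ℕ) ≠ (i : ℕ) + (l : ℕ) by omega))]
  · rw [Function.update_of_ne (Fin.ne_of_val_ne (show (j : ℕ) ≠ (i : ℕ) by omega))]
    simp only [innerN, dif_neg (by omega : ¬ (j : ℕ) < (i : ℕ)),
      dif_neg (by omega : ¬ (j : ℕ) = (i : ℕ))]
    exact Function.update_of_ne
      (Fin.ne_of_val_ne (show (j : ℕ) + q - 1 ≠ (i : ℕ) + (l : ℕ) by omega)) _ _

lemma innerN_update_gt (p q n : ℕ) (hn : p + q = n + 1) (i : Fin p)
    (G : (Fin q → A) → A) (c : Fin n → A) (t : Fin n) (ht : (i : ℕ) + q ≤ (t : ℕ)) (x : A) :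
    innerN p q n hn i G (Function.update c t x)
      = Function.update (innerN p q n hn i G c)
          ⟨(t : ℕ) + 1 - q, by have := t.isLt; have := i.isLt; omega⟩ x := by
  funext j
  rcases lt_trichotomy (j : ℕ) (i : ℕ) with h | h | h
  · rw [Function.update_of_ne (Fin.ne_of_val_ne (show (j : ℕ) ≠ (t : ℕ) + 1 - q by omega))]
    simp only [innerN, dif_pos h]
    exact Function.update_of_ne
      (Fin.ne_of_val_ne (show (j : ℕ) ≠ (t : ℕ) by omega)) _ _
  · rw [Function.update_of_ne (Fin.ne_of_val_ne (show (j : ℕ) ≠ (t : ℕ) + 1 - q by omega))]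
    simp only [innerN, dif_neg (by omega : ¬ (j : ℕ) < (i : ℕ)), dif_pos h]
    congr 1
    funext l
    exact Function.update_of_ne
      (Fin.ne_of_val_ne (show (i : ℕ) + (l : ℕ) ≠ (t : ℕ) by have := l.isLt; omega)) _ _
  · by_cases hj : (j : ℕ) + q - 1 = (t : ℕ)
    · have e1 : j = ⟨(t : ℕ) + 1 - q, by have := t.isLt; have := i.isLt; omega⟩ :=
        Fin.ext (show (j : ℕ) = (t : ℕ) + 1 - q by omega)
      rw [← e1, Function.update_self]
      simp only [innerN, dif_neg (by omega : ¬ (j : ℕ) < (i : ℕ)),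
        dif_neg (by omega : ¬ (j : ℕ) = (i : ℕ))]
      rw [show (⟨(j : ℕ) + q - 1, by have := j.isLt; have := i.isLt; omega⟩ : Fin n) = t from
        Fin.ext hj, Function.update_self]
    · rw [Function.update_of_ne (Fin.ne_of_val_ne
        (show (j : ℕ) ≠ (t : ℕ) + 1 - q by omega))]
      simp only [innerN, dif_neg (by omega : ¬ (j : ℕ) < (i : ℕ)),
        dif_neg (by omega : ¬ (j : ℕ) = (i : ℕ))]
      exact Function.update_of_ne
        (Fin.ne_of_val_ne (show (j : ℕ) + q - 1 ≠ (t : ℕ) from hj)) _ _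
/-- The brace insertion as a multilinear map. -/
def braceMLN (p q n : ℕ) (hn : p + q = n + 1)
    (f : MultilinearMap k (fun _ : Fin p => A) k) (i : Fin p)
    (G : MultilinearMap k (fun _ : Fin q => A) A) :
    MultilinearMap k (fun _ : Fin n => A) k where
  toFun c := f (innerN p q n hn i ⇑G c)
  map_update_add' {dec} c t x y := by
    rw [Subsingleton.elim dec (by clear dec; infer_instance)]
    rcases lt_trichotomy (t : ℕ) (i : ℕ) with h | h | h
    · rw [innerN_update_lt p q n hn i ⇑G c t h, innerN_update_lt p q n hn i ⇑G c t h,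
        innerN_update_lt p q n hn i ⇑G c t h, MultilinearMap.map_update_add]
    · rcases (by have := t.isLt; omega : (t : ℕ) < (i : ℕ) + q ∨ (i : ℕ) + q ≤ (t : ℕ)) with hc | hc
      · have hlq : (t : ℕ) - (i : ℕ) < q := by omega
        have e1 : t = ⟨(i : ℕ) + (((⟨(t : ℕ) - (i : ℕ), hlq⟩ : Fin q)) : ℕ), by
            have := i.isLt; have := t.isLt; omega⟩ :=
          Fin.ext (show (t : ℕ) = (i : ℕ) + ((t : ℕ) - (i : ℕ)) by omega)
        rw [e1, innerN_update_mid p q n hn i ⇑G c ⟨(t : ℕ) - (i : ℕ), hlq⟩,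
          innerN_update_mid p q n hn i ⇑G c ⟨(t : ℕ) - (i : ℕ), hlq⟩,
          innerN_update_mid p q n hn i ⇑G c ⟨(t : ℕ) - (i : ℕ), hlq⟩,
          G.map_update_add, MultilinearMap.map_update_add]
      · rw [innerN_update_gt p q n hn i ⇑G c t hc, innerN_update_gt p q n hn i ⇑G c t hc,
          innerN_update_gt p q n hn i ⇑G c t hc, MultilinearMap.map_update_add]
    · rcases (by have := t.isLt; omega : (t : ℕ) < (i : ℕ) + q ∨ (i : ℕ) + q ≤ (t : ℕ)) with hc | hc
      · have hlq : (t : ℕ) - (i : ℕ) < q := by omega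
        have e1 : t = ⟨(i : ℕ) + (((⟨(t : ℕ) - (i : ℕ), hlq⟩ : Fin q)) : ℕ), by
            have := i.isLt; have := t.isLt; omega⟩ :=
          Fin.ext (show (t : ℕ) = (i : ℕ) + ((t : ℕ) - (i : ℕ)) by omega)
        rw [e1, innerN_update_mid p q n hn i ⇑G c ⟨(t : ℕ) - (i : ℕ), hlq⟩,
          innerN_update_mid p q n hn i ⇑G c ⟨(t : ℕ) - (i : ℕ), hlq⟩,
          innerN_update_mid p q n hn i ⇑G c ⟨(t : ℕ) - (i : ℕ), hlq⟩,
          G.map_update_add, MultilinearMap.map_update_add]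
      · rw [innerN_update_gt p q n hn i ⇑G c t hc, innerN_update_gt p q n hn i ⇑G c t hc,
          innerN_update_gt p q n hn i ⇑G c t hc, MultilinearMap.map_update_add]
  map_update_smul' {dec} c t r x := by
    rw [Subsingleton.elim dec (by clear dec; infer_instance)]
    rcases lt_trichotomy (t : ℕ) (i : ℕ) with h | h | h
    · rw [innerN_update_lt p q n hn i ⇑G c t h, innerN_update_lt p q n hn i ⇑G c t h,
        MultilinearMap.map_update_smul]
    · rcases (by have := t.isLt; omega : (t : ℕ) < (i : ℕ) + q ∨ (i : ℕ) + q ≤ (t : ℕ)) with hc | hc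
      · have hlq : (t : ℕ) - (i : ℕ) < q := by omega
        have e1 : t = ⟨(i : ℕ) + (((⟨(t : ℕ) - (i : ℕ), hlq⟩ : Fin q)) : ℕ), by
            have := i.isLt; have := t.isLt; omega⟩ :=
          Fin.ext (show (t : ℕ) = (i : ℕ) + ((t : ℕ) - (i : ℕ)) by omega)
        rw [e1, innerN_update_mid p q n hn i ⇑G c ⟨(t : ℕ) - (i : ℕ), hlq⟩,
          innerN_update_mid p q n hn i ⇑G c ⟨(t : ℕ) - (i : ℕ), hlq⟩,
          G.map_update_smul, MultilinearMap.map_update_smul]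
      · rw [innerN_update_gt p q n hn i ⇑G c t hc, innerN_update_gt p q n hn i ⇑G c t hc,
          MultilinearMap.map_update_smul]
    · rcases (by have := t.isLt; omega : (t : ℕ) < (i : ℕ) + q ∨ (i : ℕ) + q ≤ (t : ℕ)) with hc | hc
      · have hlq : (t : ℕ) - (i : ℕ) < q := by omega
        have e1 : t = ⟨(i : ℕ) + (((⟨(t : ℕ) - (i : ℕ), hlq⟩ : Fin q)) : ℕ), by
            have := i.isLt; have := t.isLt; omega⟩ :=
          Fin.ext (show (t : ℕ) = (i : ℕ) + ((t : ℕ) - (i : ℕ)) by omega)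
        rw [e1, innerN_update_mid p q n hn i ⇑G c ⟨(t : ℕ) - (i : ℕ), hlq⟩,
          innerN_update_mid p q n hn i ⇑G c ⟨(t : ℕ) - (i : ℕ), hlq⟩,
          G.map_update_smul, MultilinearMap.map_update_smul]
      · rw [innerN_update_gt p q n hn i ⇑G c t hc, innerN_update_gt p q n hn i ⇑G c t hc,
          MultilinearMap.map_update_smul]

@[simp] lemma braceMLN_apply (p q n : ℕ) (hn : p + q = n + 1)
    (f : MultilinearMap k (fun _ : Fin p => A) k) (i : Fin p)
    (G : MultilinearMap k (fun _ : Fin q => A) A) (c : Fin n → A) :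
    braceMLN p q n hn f i G c = f (innerN p q n hn i ⇑G c) := rfl
lemma innerN_eq_update (p q n : ℕ) (hn : p + q = n + 1) (i : Fin p)
    (G G₀ : (Fin q → A) → A) (c : Fin n → A) :
    innerN p q n hn i G c
      = Function.update (innerN p q n hn i G₀ c) i
          (G (fun l => c ⟨(i : ℕ) + (l : ℕ), by have := i.isLt; have := l.isLt; omega⟩)) := by
  funext j
  by_cases h : j = i
  · subst h
    rw [Function.update_self]
    simp only [innerN]
    rw [dif_neg (lt_irrefl (j : ℕ)), dif_pos trivial]
  · rw [Function.update_of_ne h]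
    have hv : (j : ℕ) ≠ (i : ℕ) := fun hh => h (Fin.ext hh)
    rcases lt_or_gt_of_ne hv with hlt | hgt
    · simp only [innerN, dif_pos hlt]
    · simp only [innerN, dif_neg (by omega : ¬ (j : ℕ) < (i : ℕ)), dif_neg hv]

lemma braceMLN_G_add (p q n : ℕ) (hn : p + q = n + 1)
    (f : MultilinearMap k (fun _ : Fin p => A) k) (i : Fin p)
    (G G' : MultilinearMap k (fun _ : Fin q => A) A) :
    braceMLN p q n hn f i (G + G') = braceMLN p q n hn f i G + braceMLN p q n hn f i G' := by
  ext c
  simp only [braceMLN_apply, MultilinearMap.add_apply]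
  rw [innerN_eq_update p q n hn i ⇑(G + G') (fun _ => (0 : A)) c,
    innerN_eq_update p q n hn i ⇑G (fun _ => (0 : A)) c,
    innerN_eq_update p q n hn i ⇑G' (fun _ => (0 : A)) c]
  rw [show (⇑(G + G') : (Fin q → A) → A) = fun w => G w + G' w from rfl]
  exact f.map_update_add _ i _ _

lemma braceMLN_G_zero (p q n : ℕ) (hn : p + q = n + 1)
    (f : MultilinearMap k (fun _ : Fin p => A) k) (i : Fin p) :
    braceMLN p q n hn f i 0 = 0 := by
  ext c
  simp only [braceMLN_apply, MultilinearMap.zero_apply]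
  rw [innerN_eq_update p q n hn i ⇑(0 : MultilinearMap k (fun _ : Fin q => A) A)
    (fun _ => (0 : A)) c]
  exact f.map_update_zero _ i
/-- The iterated comultiplication `(Δ ⊗ id) ∘ Δ : A → (A ⊗ A) ⊗ A`. -/
def delta2 : A →ₗ[k] (A ⊗[k] A) ⊗[k] A :=
  (LinearMap.rTensor A (Coalgebra.comul (R := k))).comp (Coalgebra.comul (R := k))

set_option maxHeartbeats 1600000 in
/-- The `(A ⊗ A)`-valued analogue of `hatAux`:
`g ↦ (w ↦ w₍₁₎ ⊗ w₍₂₎ · g(w₍₃₎))`. -/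
def hatTwoAux : ∀ q : ℕ,
    MultilinearMap k (fun _ : Fin q => A) k →ₗ[k] ((Fin q → A) → A ⊗[k] A)
  | 0 =>
    { toFun := fun g _ => algebraMap k (A ⊗[k] A) (g Fin.elim0)
      map_add' := fun g g' => by funext w; simp [TensorProduct.add_tmul]
      map_smul' := fun c g => by
        funext w
        simp [Algebra.smul_def, Algebra.TensorProduct.algebraMap_apply,
          TensorProduct.smul_tmul', Algebra.TensorProduct.one_def] }
  | (q + 1) =>
    { toFun := fun g w =>
        (TensorProduct.lift (LinearMap.mk₂ k
          (fun (x : A ⊗[k] A) (y : A) => x * hatTwoAux q (g.curryLeft y) (Fin.tail w))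
          (fun x₁ x₂ y => add_mul _ _ _)
          (fun c x y => smul_mul_assoc c x _)
          (fun x y₁ y₂ => by simp [map_add, mul_add])
          (fun c x y => by simp [map_smul, mul_smul_comm])))
        (delta2 (w 0))
      map_add' := fun g g' => by
        funext w
        simp only [Pi.add_apply]
        generalize (delta2 (w 0) : (A ⊗[k] A) ⊗[k] A) = t
        induction t using TensorProduct.induction_on with
        | zero => simp
        | tmul x y =>
          simp [show (g + g').curryLeft = g.curryLeft + g'.curryLeft from rfl, mul_add]
        | add s t hs ht =>
          simp only [map_add] at hs ht ⊢
          rw [hs, ht]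
          abel
      map_smul' := fun c g => by
        funext w
        simp only [Pi.smul_apply, RingHom.id_apply]
        generalize (delta2 (w 0) : (A ⊗[k] A) ⊗[k] A) = t
        induction t using TensorProduct.induction_on with
        | zero => simp
        | tmul x y =>
          simp [show (c • g).curryLeft = c • g.curryLeft from rfl, mul_smul_comm]
        | add s t hs ht =>
          simp only [map_add, smul_add] at hs ht ⊢
          rw [hs, ht] }

/-- The step map in the recursion of `hatTwoAux`. -/
def twoStep (q : ℕ) (g : MultilinearMap k (fun _ : Fin (q+1) => A) k)
    (w : Fin q → A) : (A ⊗[k] A) ⊗[k] A →ₗ[k] A ⊗[k] A :=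
  TensorProduct.lift (LinearMap.mk₂ k
    (fun (x : A ⊗[k] A) (y : A) => x * hatTwoAux q (g.curryLeft y) w)
    (fun x₁ x₂ y => add_mul _ _ _)
    (fun c x y => smul_mul_assoc c x _)
    (fun x y₁ y₂ => by simp [map_add, mul_add])
    (fun c x y => by simp [map_smul, mul_smul_comm]))

@[simp] lemma twoStep_tmul (q : ℕ) (g : MultilinearMap k (fun _ : Fin (q+1) => A) k)
    (w : Fin q → A) (x : A ⊗[k] A) (y : A) :
    twoStep q g w (x ⊗ₜ[k] y) = x * hatTwoAux q (g.curryLeft y) w := by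
  simp [twoStep]

lemma hatTwoAux_succ (q : ℕ) (g : MultilinearMap k (fun _ : Fin (q+1) => A) k)
    (w : Fin (q+1) → A) :
    hatTwoAux (q+1) g w = twoStep q g (Fin.tail w) (delta2 (w 0)) :=
  rfl

lemma hatTwoAux_zero (g : MultilinearMap k (fun _ : Fin 0 => A) k) (w : Fin 0 → A) :
    hatTwoAux 0 g w = algebraMap k (A ⊗[k] A) (g w) := by
  have : w = Fin.elim0 := Subsingleton.elim _ _
  subst this
  rfl

/-- Key lemma: the comultiplication of `ĝ(w)` is given by the Sweedler-style
expression `w₍₁₎ ⊗ w₍₂₎ · g(w₍₃₎)`. -/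
lemma comul_hatAux : ∀ (q : ℕ) (g : MultilinearMap k (fun _ : Fin q => A) k)
    (w : Fin q → A),
    Coalgebra.comul (R := k) (hatAux q g w) = hatTwoAux q g w
  | 0, g, w => by
    rw [hatAux_zero_apply, hatTwoAux_zero]
    exact Bialgebra.comul_algebraMap (g w)
  | (q + 1), g, w => by
    rw [hatAux_succ, hatTwoAux_succ, delta2, LinearMap.comp_apply]
    generalize (Coalgebra.comul (R := k) (w 0) : A ⊗[k] A) = t
    induction t using TensorProduct.induction_on with
    | zero => simp
    | tmul x y =>
      rw [hatCurry_tmul, LinearMap.rTensor_tmul, twoStep_tmul,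
        MultilinearMap.smul_apply, smul_eq_mul, Bialgebra.comul_mul,
        comul_hatAux q (g.curryLeft y) (Fin.tail w)]
    | add s t hs ht =>
      simp only [map_add, MultilinearMap.add_apply] at hs ht ⊢
      rw [hs, ht]
lemma fin_cons_mk {α : Type*} {N : ℕ} (z : α) (m' : Fin N → α) (v : ℕ) (h : v + 1 < N + 1) :
    Fin.cons (α := fun _ => α) z m' ⟨v + 1, h⟩ = m' ⟨v, by omega⟩ := by
  rw [show (⟨v+1, h⟩ : Fin (N+1)) = Fin.succ ⟨v, by omega⟩ from rfl, Fin.cons_succ]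

lemma fin_cons_mk_zero {α : Type*} {N : ℕ} (z : α) (m' : Fin N → α) (h : 0 < N + 1) :
    Fin.cons (α := fun _ => α) z m' ⟨0, h⟩ = z := by
  rw [Fin.mk_zero, Fin.cons_zero]

lemma braceMLN_curry_zero (p' q m : ℕ) (hn : (p'+1) + (q+1) = (m+1) + 1)
    (hm : (p'+1) + q = m + 1) (f : MultilinearMap k (fun _ : Fin (p'+1) => A) k)
    (G : MultilinearMap k (fun _ : Fin (q+1) => A) A) (z : A) :
    (braceMLN (p'+1) (q+1) (m+1) hn f ⟨0, Nat.succ_pos p'⟩ G).curryLeft z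
      = braceMLN (p'+1) q m hm f ⟨0, Nat.succ_pos p'⟩ (G.curryLeft z) := by
  ext m'
  simp only [MultilinearMap.curryLeft_apply, braceMLN_apply]
  congr 1
  funext j
  simp only [innerN]
  by_cases h0 : (j : ℕ) = 0
  · rw [dif_neg (by simp [h0]), dif_pos (by simpa using h0),
      dif_neg (by simp [h0]), dif_pos (by simpa using h0)]
    rw [MultilinearMap.curryLeft_apply]
    congr 1
    funext l
    rcases l with ⟨lv, hlv⟩
    cases lv with
    | zero =>
      rw [show (⟨((⟨0, Nat.succ_pos p'⟩ : Fin (p'+1)) : ℕ) + ((⟨0, hlv⟩ : Fin (q+1)) : ℕ),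
          show (0:ℕ) + 0 < m+1 by omega⟩ : Fin (m+1)) = ⟨0, by omega⟩ from Fin.ext (by simp),
        fin_cons_mk_zero, fin_cons_mk_zero]
    | succ lv =>
      rw [show (⟨((⟨0, Nat.succ_pos p'⟩ : Fin (p'+1)) : ℕ) + ((⟨lv+1, hlv⟩ : Fin (q+1)) : ℕ),
          show (0:ℕ) + (lv+1) < m+1 by omega⟩ : Fin (m+1)) = ⟨lv+1, by omega⟩
          from Fin.ext (by simp),
        fin_cons_mk, fin_cons_mk]
      congr 1
      exact Fin.ext (by simp)
  · rw [dif_neg (by simp), dif_neg (by simpa using h0),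
      dif_neg (by simp), dif_neg (by simpa using h0)]
    rcases j with ⟨jv, hjv⟩
    simp only [] at h0
    rw [show (⟨((⟨jv, hjv⟩ : Fin (p'+1)) : ℕ) + (q+1) - 1,
          show jv + (q+1) - 1 < m+1 by omega⟩ : Fin (m+1))
        = ⟨(jv + q - 1) + 1, by omega⟩ from Fin.ext (by simp; omega),
      fin_cons_mk]
lemma braceMLN_curry_succ (p' q m : ℕ) (hn : (p'+1) + q = (m+1) + 1)
    (hm : p' + q = m + 1) (f : MultilinearMap k (fun _ : Fin (p'+1) => A) k)
    (j : Fin p') (G : MultilinearMap k (fun _ : Fin q => A) A) (z : A) :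
    (braceMLN (p'+1) q (m+1) hn f j.succ G).curryLeft z
      = braceMLN p' q m hm (f.curryLeft z) j G := by
  ext m'
  simp only [MultilinearMap.curryLeft_apply, braceMLN_apply]
  congr 1
  funext jj
  rcases jj with ⟨jjv, hjj⟩
  cases jjv with
  | zero =>
    rw [fin_cons_mk_zero]
    simp only [innerN]
    rw [dif_pos (show ((⟨0, hjj⟩ : Fin (p'+1)) : ℕ) < (j.succ : ℕ) by simp),
      fin_cons_mk_zero]
  | succ t =>
    rw [fin_cons_mk]
    simp only [innerN]
    rcases lt_trichotomy t (j : ℕ) with hlt | heq | hgt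
    · rw [dif_pos (show ((⟨t+1, hjj⟩ : Fin (p'+1)) : ℕ) < (j.succ : ℕ) by
          simp only [Fin.val_succ]; simp; omega),
        dif_pos (show ((⟨t, by omega⟩ : Fin p') : ℕ) < (j : ℕ) by simp; omega)]
      rw [fin_cons_mk]
    · rw [dif_neg (show ¬ ((⟨t+1, hjj⟩ : Fin (p'+1)) : ℕ) < (j.succ : ℕ) by
          simp only [Fin.val_succ]; simp; omega),
        dif_pos (show ((⟨t+1, hjj⟩ : Fin (p'+1)) : ℕ) = (j.succ : ℕ) by
          simp only [Fin.val_succ]; simp; omega),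
        dif_neg (show ¬ ((⟨t, by omega⟩ : Fin p') : ℕ) < (j : ℕ) by simp; omega),
        dif_pos (show ((⟨t, by omega⟩ : Fin p') : ℕ) = (j : ℕ) by simp; omega)]
      congr 1
      funext l
      rw [show (⟨(j.succ : ℕ) + (l : ℕ), by have := j.succ.isLt; have := l.isLt; omega⟩
            : Fin (m+1)) = ⟨((j : ℕ) + (l : ℕ)) + 1, by have := l.isLt; omega⟩ from
          Fin.ext (by simp [Fin.val_succ]; omega), fin_cons_mk]
    · rw [dif_neg (show ¬ ((⟨t+1, hjj⟩ : Fin (p'+1)) : ℕ) < (j.succ : ℕ) by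
          simp only [Fin.val_succ]; simp; omega),
        dif_neg (show ¬ ((⟨t+1, hjj⟩ : Fin (p'+1)) : ℕ) = (j.succ : ℕ) by
          simp only [Fin.val_succ]; simp; omega),
        dif_neg (show ¬ ((⟨t, by omega⟩ : Fin p') : ℕ) < (j : ℕ) by simp; omega),
        dif_neg (show ¬ ((⟨t, by omega⟩ : Fin p') : ℕ) = (j : ℕ) by simp; omega)]
      rw [show (⟨t + 1 + q - 1, show t + 1 + q - 1 < m + 1 by omega⟩ : Fin (m+1))
          = ⟨(t + q - 1) + 1, by omega⟩ from Fin.ext (by simp; omega), fin_cons_mk]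
/-- The "right-hand side" bilinear evaluation used in the main induction. -/
def rhoStep (p' : ℕ) (f : MultilinearMap k (fun _ : Fin (p'+1) => A) k)
    (u v : A) (sh : Fin p' → A) : A ⊗[k] A →ₗ[k] A :=
  TensorProduct.lift (LinearMap.mk₂ k
    (fun s₁ s₂ => (u * s₁) * hatAux p' (f.curryLeft (v * s₂)) sh)
    (fun s₁ s₁' s₂ => by simp [mul_add, add_mul])
    (fun c s₁ s₂ => by simp [mul_smul_comm, smul_mul_assoc])
    (fun s₁ s₂ s₂' => by simp [mul_add, map_add])
    (fun c s₁ s₂ => by simp [mul_smul_comm, map_smul]))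

@[simp] lemma rhoStep_tmul (p' : ℕ) (f : MultilinearMap k (fun _ : Fin (p'+1) => A) k)
    (u v : A) (sh : Fin p' → A) (s₁ s₂ : A) :
    rhoStep p' f u v sh (s₁ ⊗ₜ[k] s₂) = (u * s₁) * hatAux p' (f.curryLeft (v * s₂)) sh := by
  simp [rhoStep]

lemma rhoStep_mul (p' : ℕ) (f : MultilinearMap k (fun _ : Fin (p'+1) => A) k)
    (u v x z : A) (sh : Fin p' → A) (S : A ⊗[k] A) :
    rhoStep p' f u v sh ((x ⊗ₜ[k] z) * S) = rhoStep p' f (u * x) (v * z) sh S := by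
  induction S using TensorProduct.induction_on with
  | zero => simp
  | tmul s₁ s₂ =>
    rw [Algebra.TensorProduct.tmul_mul_tmul, rhoStep_tmul, rhoStep_tmul,
      mul_assoc u x s₁, mul_assoc v z s₂]
  | add S T hS hT => rw [mul_add, map_add, map_add, hS, hT]

lemma smul_curryLeft (q : ℕ) (v : A) (H : MultilinearMap k (fun _ : Fin (q+1) => A) A)
    (z : A) : (v • H).curryLeft z = v • H.curryLeft z := by
  ext m
  simp

lemma rhoStep_one_one (p' : ℕ) (f : MultilinearMap k (fun _ : Fin (p'+1) => A) k)
    (sh : Fin p' → A) (S : A ⊗[k] A) :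
    rhoStep p' f 1 1 sh S = hatCurry p' f S sh := by
  induction S using TensorProduct.induction_on with
  | zero => simp
  | tmul s₁ s₂ => simp [one_mul, smul_eq_mul]
  | add S T hS hT =>
    rw [map_add, map_add, MultilinearMap.add_apply, hS, hT]
lemma braceMLN_G_ksmul (p q n : ℕ) (hn : p + q = n + 1)
    (f : MultilinearMap k (fun _ : Fin p => A) k) (i : Fin p) (r : k)
    (G : MultilinearMap k (fun _ : Fin q => A) A) :
    braceMLN p q n hn f i (r • G) = r • braceMLN p q n hn f i G := by
  ext c
  simp only [braceMLN_apply, MultilinearMap.smul_apply]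
  rw [innerN_eq_update p q n hn i ⇑(r • G) (fun _ => (0 : A)) c,
    innerN_eq_update p q n hn i ⇑G (fun _ => (0 : A)) c]
  rw [show (⇑(r • G) : (Fin q → A) → A) = fun w => r • G w from rfl]
  exact f.map_update_smul _ i r _

set_option maxHeartbeats 3200000 in
set_option synthInstance.maxHeartbeats 1000000 in
lemma C2 (q : ℕ) : ∀ (p' n : ℕ) (hn : (p'+1) + q = n + 1)
    (f : MultilinearMap k (fun _ : Fin (p'+1) => A) k) (u v : A)
    (g : MultilinearMap k (fun _ : Fin q => A) k) (c : Fin n → A),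
    u * hatAux n (braceMLN (p'+1) q n hn f ⟨0, Nat.succ_pos p'⟩ (v • hatAux q g)) c
      = rhoStep p' f u v (fun t => c ⟨q + (t : ℕ), by have := t.isLt; omega⟩)
          (hatTwoAux q g (fun l => c ⟨(l : ℕ), by have := l.isLt; omega⟩)) := by
  induction q with
  | zero =>
    intro p' n hn f u v g c
    obtain rfl : p' = n := by omega
    have hG : (v • hatAux 0 g : MultilinearMap k (fun _ : Fin 0 => A) A)
        = g Fin.elim0 • (MultilinearMap.constOfIsEmpty k (fun _ : Fin 0 => A) v) := by
      ext w
      simp only [MultilinearMap.smul_apply, MultilinearMap.constOfIsEmpty_apply]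
      rw [hatAux_zero_apply, smul_eq_mul]
      rw [show g w = g Fin.elim0 from congrArg g (Subsingleton.elim _ _)]
      rw [Algebra.smul_def, ← Algebra.commutes]
      rfl
    have hB : braceMLN (p'+1) 0 p' hn f ⟨0, Nat.succ_pos p'⟩
        (MultilinearMap.constOfIsEmpty k (fun _ : Fin 0 => A) v) = f.curryLeft v := by
      ext m'
      simp only [braceMLN_apply, MultilinearMap.curryLeft_apply]
      congr 1
      funext jj
      rcases jj with ⟨jjv, hjj⟩
      simp only [innerN]
      cases jjv with
      | zero =>
        rw [dif_neg (by simp), dif_pos (by simp), fin_cons_mk_zero]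
        simp
      | succ t =>
        rw [dif_neg (by simp), dif_neg (by simp), fin_cons_mk]
        rfl
    rw [hG, braceMLN_G_ksmul, hB, map_smul, MultilinearMap.smul_apply,
      hatTwoAux_zero, Algebra.algebraMap_eq_smul_one, map_smul,
      Algebra.TensorProduct.one_def, rhoStep_tmul, mul_one, mul_one,
      show g (fun l : Fin 0 => c ⟨(l : ℕ), by have := l.isLt; omega⟩) = g Fin.elim0
        from congrArg g (Subsingleton.elim _ _),
      show (fun t : Fin p' => c ⟨0 + (t : ℕ), by have := t.isLt; omega⟩) = c
        from funext fun t => congrArg c (Fin.ext (by simp)),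
      mul_smul_comm]
  | succ q IH =>
    intro p' n hn f u v g c
    obtain ⟨m, rfl⟩ : ∃ m, n = m + 1 := ⟨n - 1, by omega⟩
    have hm : (p'+1) + q = m + 1 := by omega
    rw [hatAux_succ m _ c, hatTwoAux_succ,
      show c ⟨((0 : Fin (q+1)) : ℕ), by simp⟩ = c 0
        from congrArg c (Fin.ext (by simp)),
      show Fin.tail (fun l : Fin (q+1) => c ⟨(l : ℕ), by have := l.isLt; omega⟩)
          = (fun l : Fin q => (Fin.tail c) ⟨(l : ℕ), by have := l.isLt; omega⟩) from
        funext fun l => congrArg c (Fin.ext (by simp [Fin.tail])),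
      show (fun t : Fin p' => c ⟨(q+1) + (t : ℕ), by have := t.isLt; omega⟩)
          = (fun t : Fin p' => (Fin.tail c) ⟨q + (t : ℕ), by have := t.isLt; omega⟩) from
        funext fun t => congrArg c (Fin.ext (by simp [Fin.tail]; omega)),
      show delta2 (c 0) = (TensorProduct.assoc k A A A).symm
          ((LinearMap.lTensor A (Coalgebra.comul (R := k)))
            (Coalgebra.comul (R := k) (c 0))) from
        (Coalgebra.coassoc_symm_apply (c 0)).symm]
    generalize (Coalgebra.comul (R := k) (c 0) : A ⊗[k] A) = t
    induction t using TensorProduct.induction_on with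
    | zero => simp
    | add s t hs ht =>
      simp only [map_add, MultilinearMap.add_apply, mul_add] at hs ht ⊢
      rw [hs, ht]
    | tmul x z =>
      rw [hatCurry_tmul, MultilinearMap.smul_apply, smul_eq_mul,
        braceMLN_curry_zero p' q m hn hm f (v • hatAux (q+1) g) z,
        smul_curryLeft, hatAux_succ_curry, LinearMap.lTensor_tmul]
      generalize (Coalgebra.comul (R := k) z : A ⊗[k] A) = t₂
      induction t₂ using TensorProduct.induction_on with
      | zero =>
        rw [TensorProduct.tmul_zero]
        simp [braceMLN_G_zero]
      | add s₂ t₂ hs₂ ht₂ =>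
        simp only [map_add, smul_add, braceMLN_G_add, MultilinearMap.add_apply,
          mul_add, TensorProduct.tmul_add] at hs₂ ht₂ ⊢
        rw [hs₂, ht₂]
      | tmul z₁ z₂ =>
        rw [hatCurry_tmul, smul_smul, TensorProduct.assoc_symm_tmul, twoStep_tmul,
          rhoStep_mul, ← mul_assoc u x,
          IH p' m hm f (u * x) (v * z₁) (g.curryLeft z₂) (Fin.tail c)]
set_option maxHeartbeats 3200000 in
set_option synthInstance.maxHeartbeats 1000000 in
lemma L1 : ∀ (p q n : ℕ) (hn : p + q = n + 1)
    (f : MultilinearMap k (fun _ : Fin p => A) k) (i : Fin p)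
    (g : MultilinearMap k (fun _ : Fin q => A) k) (c : Fin n → A),
    hatAux n (braceMLN p q n hn f i (hatAux q g)) c
      = hatAux p f (innerN p q n hn i ⇑(hatAux q g) c) := by
  intro p
  induction p with
  | zero => intro q n hn f i g c; exact i.elim0
  | succ p' IHp =>
    intro q n hn f i g c
    obtain ⟨iv, hi⟩ := i
    cases iv with
    | zero =>
      have key := C2 q p' n hn f 1 1 g c
      rw [one_smul, one_mul] at key
      rw [show (⟨0, hi⟩ : Fin (p'+1)) = ⟨0, Nat.succ_pos p'⟩ from rfl, key,
        rhoStep_one_one, hatAux_succ p' f _]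
      have e0 : innerN (p'+1) q n hn ⟨0, Nat.succ_pos p'⟩ ⇑(hatAux q g) c 0
          = hatAux q g (fun l : Fin q => c ⟨(l : ℕ), by have := l.isLt; omega⟩) := by
        simp only [innerN]
        rw [dif_neg (by simp), dif_pos (by simp)]
        congr 1
        funext l
        exact congrArg c (Fin.ext (by simp))
      have e1 : Fin.tail (innerN (p'+1) q n hn ⟨0, Nat.succ_pos p'⟩ ⇑(hatAux q g) c)
          = (fun t : Fin p' => c ⟨q + (t : ℕ), by have := t.isLt; omega⟩) := by
        funext s
        show innerN (p'+1) q n hn ⟨0, Nat.succ_pos p'⟩ ⇑(hatAux q g) c s.succ = _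
        simp only [innerN]
        rw [dif_neg (by simp), dif_neg (by simp)]
        exact congrArg c (Fin.ext (by simp; omega))
      rw [e0, e1, comul_hatAux]
    | succ t =>
      have hp' : 0 < p' := by omega
      have hjt : t < p' := by omega
      rw [show (⟨t+1, hi⟩ : Fin (p'+1)) = (⟨t, hjt⟩ : Fin p').succ from Fin.ext (by simp)]
      obtain ⟨m, rfl⟩ : ∃ m, n = m + 1 := ⟨n - 1, by omega⟩
      have hm : p' + q = m + 1 := by omega
      have e0 : innerN (p'+1) q (m+1) hn (⟨t, hjt⟩ : Fin p').succ ⇑(hatAux q g) c 0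
          = c 0 := by
        simp only [innerN]
        rw [dif_pos (by simp)]
        exact congrArg c (Fin.ext (by simp))
      have e1 : Fin.tail (innerN (p'+1) q (m+1) hn (⟨t, hjt⟩ : Fin p').succ
            ⇑(hatAux q g) c)
          = innerN p' q m hm ⟨t, hjt⟩ ⇑(hatAux q g) (Fin.tail c) := by
        funext s
        show innerN (p'+1) q (m+1) hn (⟨t, hjt⟩ : Fin p').succ ⇑(hatAux q g) c s.succ = _
        rcases lt_trichotomy (s : ℕ) t with hlt | heq | hgt
        · simp only [innerN]
          rw [dif_pos (show (s.succ : ℕ) < (((⟨t, hjt⟩ : Fin p').succ) : ℕ) by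
              simp [Fin.val_succ]; omega),
            dif_pos (show (s : ℕ) < ((⟨t, hjt⟩ : Fin p') : ℕ) by simp; omega)]
          exact congrArg c (Fin.ext (by simp [Fin.tail]))
        · simp only [innerN]
          rw [dif_neg (show ¬ (s.succ : ℕ) < (((⟨t, hjt⟩ : Fin p').succ) : ℕ) by
              simp [Fin.val_succ]; omega),
            dif_pos (show (s.succ : ℕ) = (((⟨t, hjt⟩ : Fin p').succ) : ℕ) by
              simp [Fin.val_succ]; omega),
            dif_neg (show ¬ (s : ℕ) < ((⟨t, hjt⟩ : Fin p') : ℕ) by simp; omega),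
            dif_pos (show (s : ℕ) = ((⟨t, hjt⟩ : Fin p') : ℕ) by simp; omega)]
          congr 1
          funext l
          exact congrArg c (Fin.ext (by simp [Fin.tail, Fin.val_succ]; omega))
        · simp only [innerN]
          rw [dif_neg (show ¬ (s.succ : ℕ) < (((⟨t, hjt⟩ : Fin p').succ) : ℕ) by
              simp [Fin.val_succ]; omega),
            dif_neg (show ¬ (s.succ : ℕ) = (((⟨t, hjt⟩ : Fin p').succ) : ℕ) by
              simp [Fin.val_succ]; omega),
            dif_neg (show ¬ (s : ℕ) < ((⟨t, hjt⟩ : Fin p') : ℕ) by simp; omega),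
            dif_neg (show ¬ (s : ℕ) = ((⟨t, hjt⟩ : Fin p') : ℕ) by simp; omega)]
          exact congrArg c (Fin.ext (by simp [Fin.tail]; omega))
      rw [hatAux_succ m _ c, hatAux_succ p' f _, e0, e1]
      generalize (Coalgebra.comul (R := k) (c 0) : A ⊗[k] A) = tt
      induction tt using TensorProduct.induction_on with
      | zero => simp only [map_zero, MultilinearMap.zero_apply]
      | add s1 s2 hs1 hs2 =>
        simp only [map_add, MultilinearMap.add_apply] at hs1 hs2 ⊢
        rw [hs1, hs2]
      | tmul x z =>
        rw [hatCurry_tmul, hatCurry_tmul, MultilinearMap.smul_apply,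
          MultilinearMap.smul_apply,
          braceMLN_curry_succ p' q m hn hm f ⟨t, hjt⟩ (hatAux q g) z,
          IHp q m hm (f.curryLeft z) ⟨t, hjt⟩ g (Fin.tail c)]
set_option maxHeartbeats 3200000 in
set_option synthInstance.maxHeartbeats 1000000 in
theorem hat_gerstenhaber_bracket' (p q : ℕ)
    (f : MultilinearMap k (fun _ : Fin p => A) k)
    (g : MultilinearMap k (fun _ : Fin q => A) k) :
    (fun c : Fin (p + q - 1) → A =>
        composeIns k p q (hat p ⇑f) (hat q ⇑g) c
          - (-1 : k) ^ ((p - 1) * (q - 1)) •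
              composeIns k q p (hat q ⇑g) (hat p ⇑f)
                (fun j => c ⟨(j : ℕ), j.isLt.trans_le (by omega)⟩))
      = hat (p + q - 1) (fun c : Fin (p + q - 1) → A =>
          composeIns k p q ⇑f (hat q ⇑g) c
            - (-1 : k) ^ ((p - 1) * (q - 1)) *
                composeIns k q p ⇑g (hat p ⇑f)
                  (fun j => c ⟨(j : ℕ), j.isLt.trans_le (by omega)⟩)) := by
  have hcast : q + p - 1 = p + q - 1 := by omega
  rw [hat_coe p f, hat_coe q g]
  set W : MultilinearMap k (fun _ : Fin (p+q-1) => A) k :=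
    (∑ i : Fin p, (-1 : k) ^ (q * (i : ℕ)) •
        braceMLN p q (p+q-1) (by have := i.isLt; omega) f i (hatAux q g))
      - (-1 : k) ^ ((p-1)*(q-1)) • ∑ j : Fin q, (-1 : k) ^ (p * (j : ℕ)) •
          (braceMLN q p (q+p-1) (by have := j.isLt; omega) g j
            (hatAux p f)).domDomCongr (finCongr hcast) with hWdef
  have hR : (fun c : Fin (p+q-1) → A =>
      composeIns k p q ⇑f ⇑(hatAux q g) c - (-1:k)^((p-1)*(q-1)) *
        composeIns k q p ⇑g ⇑(hatAux p f)
          (fun j => c ⟨(j:ℕ), by have := j.isLt; omega⟩))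
      = ⇑W := by
    funext c
    simp only [hWdef, composeIns, MultilinearMap.sub_apply, MultilinearMap.smul_apply,
      MultilinearMap.sum_apply, MultilinearMap.domDomCongr_apply, braceMLN_apply,
      smul_eq_mul]
    rfl
  rw [hR, hat_coe _ W]
  funext c
  simp only [composeIns, hWdef, map_sub, map_smul, map_sum,
    MultilinearMap.sub_apply, MultilinearMap.smul_apply, MultilinearMap.sum_apply]
  congr 1
  · exact Finset.sum_congr rfl fun i _ => by
      exact congrArg (fun x => (-1 : k) ^ (q * (i : ℕ)) • x)
        (L1 p q (p+q-1) (by have := i.isLt; omega) f i g c).symm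
  · congr 1
    exact Finset.sum_congr rfl fun j _ => by
      have h1 := hatAux_cast hcast
        (braceMLN q p (q+p-1) (by have := j.isLt; omega) g j (hatAux p f)) c
      have h2 := L1 q p (q+p-1) (by have := j.isLt; omega) g j f
        (fun s => c (finCongr hcast s))
      exact congrArg (fun x => (-1 : k) ^ (p * (j : ℕ)) • x) (h1.trans h2).symm

end Dev


section Statements

variable {k A : Type*} [Field k] [Ring A] [HopfAlgebra k A]

/-- The Gerstenhaber bracket satisfies
`[f̂, ĝ] = (f ∘ ĝ − (−1)^{(p−1)(q−1)} g ∘ f̂)^`; in particular the image of `f ↦ f̂` is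
closed under the Gerstenhaber bracket of Hochschild cochains with values in `A`.
(Here `[F,G] = F ∘ G − (−1)^{(p−1)(q−1)} G ∘ F`.) -/
theorem hat_gerstenhaber_bracket (p q : ℕ)
    (f : MultilinearMap k (fun _ : Fin p => A) k)
    (g : MultilinearMap k (fun _ : Fin q => A) k) :
    (fun c : Fin (p + q - 1) → A =>
        composeIns k p q (hat p ⇑f) (hat q ⇑g) c
          - (-1 : k) ^ ((p - 1) * (q - 1)) •
              composeIns k q p (hat q ⇑g) (hat p ⇑f)
                (fun j => c ⟨(j : ℕ), by have := j.isLt; omega⟩))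
      = hat (p + q - 1) (fun c : Fin (p + q - 1) → A =>
          composeIns k p q ⇑f (hat q ⇑g) c
            - (-1 : k) ^ ((p - 1) * (q - 1)) *
                composeIns k q p ⇑g (hat p ⇑f)
                  (fun j => c ⟨(j : ℕ), by have := j.isLt; omega⟩)) :=
  hat_gerstenhaber_bracket' p q f g

end Statements
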